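/- arXiv:2505.03205 — 2 statements merged into one kernel-verified Lean document; each statement's English description precedes it below -/
import Mathlib

section
/- (Sum of tokens) Let d_embed = 5, M > 0, and x = (x¹,…,x^D) ∈ ℝ^D with ‖x‖_∞ ≤ M. Let H ∈ ℝ^{5×ℓ} with ℓ ≥ D+1 be the embedding matrix whose first row is (x¹,…,x^D, 0,…,0), second row zero, rows 3–4 the positional encodings, and fifth row all ones. Then there exists a transformer block B ∈ 𝓑(D, 6, d_embed) such that B(H) equals H except that the (1, D+1) entry is x¹ + ⋯ + x^D, with weight bound ‖θ_B‖_∞ ≤ O(ℓ² M² ‖H‖²_{∞,∞}). -/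
open scoped BigOperators
open Metric Set MeasureTheory
open scoped Matrix

namespace Paper

noncomputable section

/-- ReLU activation. -/
def relu (x : ℝ) : ℝ := max x 0

/-- Euclidean space `ℝ^D` with the `ℓ²` norm. -/
abbrev Euc (D : ℕ) := EuclideanSpace ℝ (Fin D)

/-- Maximum absolute entry of a matrix (`‖H‖_{∞,∞}`). -/
def matSup {m n : ℕ} (H : Matrix (Fin m) (Fin n) ℝ) : ℝ := ⨆ i, ⨆ j, |H i j|

/-- Sup norm `‖x‖_∞` of a vector. -/
def supNorm {D : ℕ} (x : Fin D → ℝ) : ℝ := ⨆ i, |x i|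

/-- An attention head: query, key and value matrices. -/
structure Head (de : ℕ) where
  Q : Matrix (Fin de) (Fin de) ℝ
  K : Matrix (Fin de) (Fin de) ℝ
  V : Matrix (Fin de) (Fin de) ℝ

/-- Action of an attention head on an embedding matrix:
`A(H) = V H σ((K H)ᵀ Q H)` with `σ = ReLU`. -/
def Head.eval {de : ℕ} (A : Head de) {ℓ : ℕ} (H : Matrix (Fin de) (Fin ℓ) ℝ) :
    Matrix (Fin de) (Fin ℓ) ℝ :=
  A.V * H * ((A.K * H)ᵀ * (A.Q * H)).map relu

/-- Tokenwise action of an attention head: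
`A(h_t) = Σ_j σ(⟨Q h_t, K h_j⟩) V h_j`. -/
def Head.tokenEval {de ℓ : ℕ} (A : Head de) (H : Matrix (Fin de) (Fin ℓ) ℝ)
    (t : Fin ℓ) : Fin de → ℝ := fun i =>
  ∑ j : Fin ℓ,
    relu (∑ k, A.Q.mulVec (fun r => H r t) k * A.K.mulVec (fun r => H r j) k) *
      A.V.mulVec (fun r => H r j) i

/-- Maximum weight magnitude of an attention head. -/
def Head.wnorm {de : ℕ} (A : Head de) : ℝ := matSup A.Q ⊔ matSup A.K ⊔ matSup A.V

/-- A fully-connected (tokenwise) ReLU feed-forward network of depth `L`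
and hidden width `w` on embedding dimension `de`. -/
structure FFN (de w L : ℕ) where
  Win : Matrix (Fin w) (Fin de) ℝ
  bin : Fin w → ℝ
  Wmid : Fin L → Matrix (Fin w) (Fin w) ℝ
  bmid : Fin L → Fin w → ℝ
  Wout : Matrix (Fin de) (Fin w) ℝ
  bout : Fin de → ℝ

/-- Evaluation of a feed-forward ReLU network on one token. -/
def FFN.eval {de w L : ℕ} (f : FFN de w L) (x : Fin de → ℝ) : Fin de → ℝ :=
  let h0 : Fin w → ℝ := fun i => relu (∑ j, f.Win i j * x j + f.bin i)
  let hL : Fin w → ℝ := (List.finRange L).foldl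
    (fun h k => fun i => relu (∑ j, f.Wmid k i j * h j + f.bmid k i)) h0
  fun i => ∑ j, f.Wout i j * hL j + f.bout i

/-- Maximum weight magnitude of a feed-forward network. -/
def FFN.wnorm {de w L : ℕ} (f : FFN de w L) : ℝ :=
  matSup f.Win ⊔ (⨆ i, |f.bin i|) ⊔ (⨆ k, matSup (f.Wmid k)) ⊔
    (⨆ k, ⨆ i, |f.bmid k i|) ⊔ matSup f.Wout ⊔ (⨆ i, |f.bout i|)

/-- A two-layer feed-forward ReLU network. -/
structure TwoLayerFFN (de w : ℕ) where
  W1 : Matrix (Fin w) (Fin de) ℝ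
  b1 : Fin w → ℝ
  W2 : Matrix (Fin de) (Fin w) ℝ
  b2 : Fin de → ℝ

def TwoLayerFFN.eval {de w : ℕ} (f : TwoLayerFFN de w) (x : Fin de → ℝ) :
    Fin de → ℝ := fun i =>
  ∑ j, f.W2 i j * relu (∑ k, f.W1 j k * x k + f.b1 j) + f.b2 i

def TwoLayerFFN.wnorm {de w : ℕ} (f : TwoLayerFFN de w) : ℝ :=
  matSup f.W1 ⊔ (⨆ i, |f.b1 i|) ⊔ matSup f.W2 ⊔ (⨆ i, |f.b2 i|)

/-- A transformer block `B(H) = FFN(MHA(H)+H) + MHA(H) + H` with `m` attention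
heads and a tokenwise feed-forward network of depth `L` and width `w`;
this formalizes the class `𝓑(m, L, de)`. -/
structure Block (de m w L : ℕ) where
  heads : Fin m → Head de
  ffn : FFN de w L

def Block.eval {de m w L : ℕ} (B : Block de m w L) {ℓ : ℕ}
    (H : Matrix (Fin de) (Fin ℓ) ℝ) : Matrix (Fin de) (Fin ℓ) ℝ :=
  let H1 := (∑ j, (B.heads j).eval H) + H
  Matrix.of (fun i t => B.ffn.eval (fun r => H1 r t) i) + H1

def Block.wnorm {de m w L : ℕ} (B : Block de m w L) : ℝ :=
  (⨆ j, (B.heads j).wnorm) ⊔ B.ffn.wnorm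

/-- A transformer network: linear embedding, positional encoding, `LT` transformer
blocks (each with `mT` heads and FFNs of depth `LF`, width `wF`), and a decoding
layer returning the first entry of the last column. -/
structure TransformerNet (D LT mT de ℓ LF wF : ℕ) where
  emb : Fin de → Fin ℓ → Fin D → ℝ
  PE : Matrix (Fin de) (Fin ℓ) ℝ
  blocks : Fin LT → Block de mT wF LF

def TransformerNet.eval {D LT mT de ℓ LF wF : ℕ}
    (T : TransformerNet D LT mT de ℓ LF wF) (x : Fin D → ℝ) : ℝ :=
  let H0 : Matrix (Fin de) (Fin ℓ) ℝ :=
    T.PE + Matrix.of fun i t => ∑ j, T.emb i t j * x j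
  let HL := (List.finRange LT).foldl (fun H k => (T.blocks k).eval H) H0
  if h : 0 < de ∧ 0 < ℓ then HL ⟨0, h.1⟩ ⟨ℓ - 1, Nat.sub_lt h.2 Nat.one_pos⟩ else 0

/-- Maximum weight magnitude `‖θ‖_∞` of a transformer network. -/
def TransformerNet.wnorm {D LT mT de ℓ LF wF : ℕ}
    (T : TransformerNet D LT mT de ℓ LF wF) : ℝ :=
  (⨆ i, ⨆ t, ⨆ j, |T.emb i t j|) ⊔ matSup T.PE ⊔ (⨆ k, (T.blocks k).wnorm)

/-- Membership in the transformer class `𝒯(L_T, m_T, d_embed, ℓ, L_FFN, w_FFN, R, κ)`: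
sup-norm output bound `R` and weight magnitudes at most `κ`. -/
def TransformerNet.inClass {D LT mT de ℓ LF wF : ℕ}
    (T : TransformerNet D LT mT de ℓ LF wF) (R κ : ℝ) : Prop :=
  (∀ x : Fin D → ℝ, |T.eval x| ≤ R) ∧ T.wnorm ≤ κ

/-- Medial axis of a set. -/
def medialAxis {D : ℕ} (S : Set (Euc D)) : Set (Euc D) :=
  {x | ∃ p ∈ S, ∃ q ∈ S, p ≠ q ∧
    dist p x = infDist x S ∧ dist q x = infDist x S}

/-- Local reach `τ_M(v)`. -/
def localReach {D : ℕ} (S : Set (Euc D)) (v : Euc D) : ℝ :=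
  infDist v (medialAxis S)

/-- Reach `τ_M` of a set. -/
def reach {D : ℕ} (S : Set (Euc D)) : ℝ := ⨅ v ∈ S, localReach S v

/-- Geodesic distance on `S`: infimum of lengths of `C¹` curves in `S`. -/
def geoDist {D : ℕ} (S : Set (Euc D)) (v v' : Euc D) : ℝ :=
  sInf {l : ℝ | ∃ γ : ℝ → Euc D, (∀ t ∈ Icc (0:ℝ) 1, γ t ∈ S) ∧
    ContDiffOn ℝ 1 γ (Icc 0 1) ∧ γ 0 = v ∧ γ 1 = v' ∧
    l = ∫ t in (0:ℝ)..1, ‖deriv γ t‖}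

/-- Orthogonal projection onto `S` (a choice of nearest point, when one exists). -/
def projOn {D : ℕ} (S : Set (Euc D)) (x : Euc D) : Euc D :=
  Classical.epsilon fun y => y ∈ S ∧ dist x y = infDist x S

/-- A nonempty, compact, connected `d`-dimensional manifold `M ⊆ [0,1]^D`,
together with a choice of orthonormal tangent frames `P(v)`. -/
structure GoodManifold (D d : ℕ) where
  carrier : Set (Euc D)
  nonempty : carrier.Nonempty
  compact : IsCompact carrier
  connected : IsConnected carrier
  subset_cube : ∀ x ∈ carrier, ∀ i, x i ∈ Icc (0:ℝ) 1
  locallyEuclidean : ∀ v ∈ carrier, ∃ U : Set (Euc D), IsOpen U ∧ v ∈ U ∧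
    ∃ V : Set (EuclideanSpace ℝ (Fin d)), IsOpen V ∧
      Nonempty (↥(carrier ∩ U) ≃ₜ ↥V)
  frame : Euc D → Matrix (Fin D) (Fin d) ℝ
  frame_orthonormal : ∀ v ∈ carrier, (frame v)ᵀ * frame v = 1

/-- The tubular region `M(q)` around the manifold. -/
def GoodManifold.tube {D d : ℕ} (M : GoodManifold D d) (q : ℝ) : Set (Euc D) :=
  {x | ∃ v ∈ M.carrier, ∃ u : Euc D, x = v + u ∧
    (M.frame v)ᵀ.mulVec (fun i => u i) = 0 ∧
    ‖u‖ < q * localReach M.carrier v}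

/-- The volume `Vol(M)`: the `d`-dimensional Hausdorff measure of the carrier. -/
def vol {D d : ℕ} (M : GoodManifold D d) : ℝ :=
  (MeasureTheory.Measure.hausdorffMeasure (d : ℝ) M.carrier).toReal

/-- A maximal `δ`-separated net `{z₁,…,z_K}` of `M` w.r.t. geodesic distance. -/
structure SepNet {D d : ℕ} (M : GoodManifold D d) (δ : ℝ) (K : ℕ) where
  z : Fin K → Euc D
  mem : ∀ i, z i ∈ M.carrier
  sep : ∀ i j, i ≠ j → δ < geoDist M.carrier (z i) (z j)
  maximal : ∀ y ∈ M.carrier, ∃ i, geoDist M.carrier y (z i) ≤ δ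

/-- The bump functions `η̃_i` built from the net, with `p = (1+q)/2` and
`h = 6/(1 - q p⁻¹)`. -/
def etaTilde {D d K : ℕ} (M : GoodManifold D d) (q δ : ℝ) (N : SepNet M δ K)
    (i : Fin K) (x : Euc D) : ℝ :=
  relu (1 - (dist x (N.z i) / (((1 + q) / 2) * localReach M.carrier (N.z i))) ^ 2
    - (Real.sqrt (∑ j, (∑ r, M.frame (N.z i) r j * (x r - N.z i r)) ^ 2)
        / ((6 / (1 - q / ((1 + q) / 2))) * δ)) ^ 2)

/-- The normalized partition of unity `η_i = η̃_i / ‖η̃‖₁`. -/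
def etaFun {D d K : ℕ} (M : GoodManifold D d) (q δ : ℝ) (N : SepNet M δ K)
    (i : Fin K) (x : Euc D) : ℝ :=
  etaTilde M q δ N i x / ∑ j, etaTilde M q δ N j x

/-- Embedding matrix predicate for `d_embed = 5`: second row zero, rows 3–4 the
sinusoidal positional encodings, fifth row all ones. -/
def IsEmbed5 {ℓ : ℕ} (H : Matrix (Fin 5) (Fin ℓ) ℝ) : Prop :=
  (∀ t, H 1 t = 0) ∧
  (∀ t : Fin ℓ, H 2 t = Real.cos ((((t : ℕ) : ℝ) + 1) * Real.pi / (2 * ℓ))) ∧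
  (∀ t : Fin ℓ, H 3 t = Real.sin ((((t : ℕ) : ℝ) + 1) * Real.pi / (2 * ℓ))) ∧
  (∀ t, H 4 t = 1)

/-- Embedding matrix predicate for general `d_embed = e + 5 ≥ 5`: rows
`d_embed−2, d_embed−1` are the positional encodings and the last row is all ones. -/
def IsEmbedG (e ℓ : ℕ) (H : Matrix (Fin (e + 5)) (Fin ℓ) ℝ) : Prop :=
  (∀ t : Fin ℓ, H ⟨e + 2, by omega⟩ t
      = Real.cos ((((t : ℕ) : ℝ) + 1) * Real.pi / (2 * ℓ))) ∧
  (∀ t : Fin ℓ, H ⟨e + 3, by omega⟩ t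
      = Real.sin ((((t : ℕ) : ℝ) + 1) * Real.pi / (2 * ℓ))) ∧
  (∀ t, H ⟨e + 4, by omega⟩ t = 1)

/-! The single active head has the all-ones row as key and a query built from the positional
encoding of token `D`, so it scores token `t` by `cos (θ_t - θ_D) - cos (π / 2ℓ)`: positive only at
`t = D`. It therefore writes `c · ∑ x^j`, for some small `c > 0`, into that token and nowhere
else. The feed-forward network, gated by the same encoding so that it vanishes on every other
token, then adds `(1/c - 1)` times this entry. Every weight has to stay below a prescribed
`κ > 0`, so the large factor `1/c - 1` is split over `N` pairs of hidden neurons, each pair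
computing `v · (relu a - relu (-a)) = v · a` with `|v| ≤ κ`. Taking `κ = M²` gives the bound. -/

lemma relu_of_nonpos {a : ℝ} (h : a ≤ 0) : relu a = 0 := max_eq_right h

lemma relu_of_nonneg {a : ℝ} (h : 0 ≤ a) : relu a = a := max_eq_left h

lemma relu_nonneg (a : ℝ) : 0 ≤ relu a := le_max_right a 0

lemma relu_sub_relu_neg (a : ℝ) : relu a - relu (-a) = a := by
  simp only [relu]
  rcases le_total a 0 with h | h <;> simp [h]

lemma relu_add_sub_relu_sub_of_le_neg_abs {g b : ℝ} (h : g ≤ -|b|) :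
    relu (g + b) - relu (g - b) = 0 := by
  rw [relu_of_nonpos (by linarith [le_abs_self b]), relu_of_nonpos (by linarith [neg_abs_le b]),
    sub_zero]

lemma abs_le_matSup {m n : ℕ} (H : Matrix (Fin m) (Fin n) ℝ) (i : Fin m) (j : Fin n) :
    |H i j| ≤ matSup H :=
  le_ciSup_of_le (Set.finite_range _).bddAbove i <|
    le_ciSup (Set.finite_range fun j => |H i j|).bddAbove j

lemma matSup_le {m n : ℕ} {H : Matrix (Fin m) (Fin n) ℝ} {c : ℝ} (hc : 0 ≤ c)
    (h : ∀ i j, |H i j| ≤ c) : matSup H ≤ c :=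
  Real.iSup_le (fun i => Real.iSup_le (h i) hc) hc

lemma exists_nat_mul_eq (r : ℝ) {κ u : ℝ} (hκ : 0 < κ) (hu : 0 < u) :
    ∃ (N : ℕ) (v : ℝ), |v| ≤ κ ∧ N * v * u = r := by
  obtain ⟨N, hN⟩ := exists_nat_gt (|r| / (κ * u))
  have hN0 : (0 : ℝ) < N := lt_of_le_of_lt (by positivity) hN
  refine ⟨N, r / (N * u), ?_, by field_simp⟩
  rw [abs_div, abs_of_pos (show (0 : ℝ) < N * u by positivity), div_le_iff₀ (by positivity)]
  rw [div_lt_iff₀ (by positivity)] at hN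
  linarith [show N * (κ * u) = κ * (N * u) by ring]

lemma sum_eq_sum_of_zero_extension {ℓ D : ℕ} (hD : D ≤ ℓ) (f : Fin ℓ → ℝ) (x : Fin D → ℝ)
    (hx : ∀ t : Fin ℓ, ∀ h : (t : ℕ) < D, f t = x ⟨t, h⟩)
    (h0 : ∀ t : Fin ℓ, D ≤ (t : ℕ) → f t = 0) : ∑ t, f t = ∑ j, x j := by
  refine (Fintype.sum_of_injective (Fin.castLE hD) (Fin.castLE_injective hD) x f
    (fun t ht => h0 t ?_) fun j => (hx (Fin.castLE hD j) j.isLt).symm).symm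
  by_contra h
  exact ht ⟨⟨t, not_le.mp h⟩, rfl⟩

section Head

variable {de ℓ : ℕ}

def zeroHead (de : ℕ) : Head de := ⟨0, 0, 0⟩

@[simp] lemma zeroHead_eval (H : Matrix (Fin de) (Fin ℓ) ℝ) : (zeroHead de).eval H = 0 := by
  simp [zeroHead, Head.eval]

def sumHead (o u : Fin de) (q : Fin de → ℝ) (κ : ℝ) : Head de :=
  ⟨Matrix.of (Pi.single o q), Matrix.single o u κ, Matrix.single o o κ⟩

lemma sumHead_eval {o u : Fin de} (q : Fin de → ℝ) (κ : ℝ) {H : Matrix (Fin de) (Fin ℓ) ℝ}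
    (hu : ∀ s, H u s = 1) (i : Fin de) (t : Fin ℓ) :
    (sumHead o u q κ).eval H i t =
      if i = o then κ * (∑ s, H o s) * relu (κ * (q ⬝ᵥ fun r => H r t)) else 0 := by
  have hscore : ∀ s, ((Matrix.single o u κ * H)ᵀ * (Matrix.of (Pi.single o q) * H)) s t =
      κ * (q ⬝ᵥ fun r => H r t) := by
    intro s
    have hkey : ∀ k, (Matrix.single o u κ * H) k s = if k = o then κ else 0 := by
      intro k
      split_ifs with hk
      · subst hk
        simp [Matrix.single_mul_apply_same, hu]
      · exact Matrix.single_mul_apply_of_ne _ _ _ _ _ hk _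
    rw [Matrix.mul_apply]
    simp only [Matrix.transpose_apply, hkey, ite_mul, zero_mul, Finset.sum_ite_eq',
      Finset.mem_univ, if_true]
    simp [Matrix.mul_apply, dotProduct]
  simp only [Head.eval, sumHead, Matrix.mul_apply (M := Matrix.single o o κ * H),
    Matrix.map_apply, hscore]
  split_ifs with hi
  · subst hi
    simp [Matrix.single_mul_apply_same, Finset.sum_mul, Finset.mul_sum]
  · simp [Matrix.single_mul_apply_of_ne _ _ _ _ _ hi]

lemma sumHead_wnorm_le {o u : Fin de} {q : Fin de → ℝ} {κ : ℝ} (hκ : 0 ≤ κ)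
    (hq : ∀ r, |q r| ≤ κ) : (sumHead o u q κ).wnorm ≤ κ := by
  refine max_le (max_le (matSup_le hκ fun i j => ?_) (matSup_le hκ fun i j => ?_))
    (matSup_le hκ fun i j => ?_)
  · by_cases hi : i = o
    · subst hi
      simpa [sumHead] using hq j
    · simp [sumHead, hi, hκ]
  all_goals
    simp only [sumHead, Matrix.single_apply]
    split_ifs <;> simp [abs_of_nonneg hκ, hκ]

def firstHeadOnly (m : ℕ) (A : Head de) : Fin m → Head de :=
  fun j => if (j : ℕ) = 0 then A else zeroHead de

lemma sum_firstHeadOnly_eval {m : ℕ} (hm : 0 < m) (A : Head de)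
    (H : Matrix (Fin de) (Fin ℓ) ℝ) : ∑ j, (firstHeadOnly m A j).eval H = A.eval H := by
  obtain ⟨m, rfl⟩ := Nat.exists_eq_add_one_of_ne_zero hm.ne'
  simp [Fin.sum_univ_succ, firstHeadOnly]

lemma firstHeadOnly_wnorm_le {m : ℕ} {A : Head de} {κ : ℝ} (hκ : 0 ≤ κ) (hA : A.wnorm ≤ κ)
    (j : Fin m) : (firstHeadOnly m A j).wnorm ≤ κ := by
  unfold firstHeadOnly
  split_ifs
  · exact hA
  · have h0 : matSup (0 : Matrix (Fin de) (Fin de) ℝ) ≤ κ :=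
      matSup_le hκ fun _ _ => by simp [hκ]
    exact max_le (max_le h0 h0) h0

end Head

section FFN

variable {de : ℕ}

lemma foldl_relu_mul {β : Type*} {w : ℕ} {κ : ℝ} (hκ : 0 ≤ κ) (l : List β) (h : Fin w → ℝ)
    (hh : 0 ≤ h) : l.foldl (fun h _ i => relu (κ * h i)) h = fun i => κ ^ l.length * h i := by
  induction l generalizing h with
  | nil => simp
  | cons _ l ih =>
    rw [List.foldl_cons, ih _ fun i => relu_nonneg _]
    funext i
    rw [relu_of_nonneg (mul_nonneg hκ (hh i)), List.length_cons, pow_succ]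
    ring

lemma FFN.eval_smul_one {w L : ℕ} (Win : Matrix (Fin w) (Fin de) ℝ)
    (Wout : Matrix (Fin de) (Fin w) ℝ) {κ : ℝ} (hκ : 0 ≤ κ) (y : Fin de → ℝ) (i : Fin de) :
    (⟨Win, 0, fun _ => κ • 1, 0, Wout, 0⟩ : FFN de w L).eval y i =
      κ ^ L * ∑ j, Wout i j * relu ((Win *ᵥ y) j) := by
  have hstep : (fun (h : Fin w → ℝ) (k : Fin L) (i : Fin w) =>
      relu (∑ j, (κ • (1 : Matrix (Fin w) (Fin w) ℝ)) i j * h j + (0 : Fin L → Fin w → ℝ) k i)) =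
      fun h _ i => relu (κ * h i) := by
    funext h k i
    simp [Matrix.smul_apply, Matrix.one_apply]
  simp only [FFN.eval, hstep]
  rw [foldl_relu_mul hκ _ _ fun i => relu_nonneg _]
  simp [Finset.mul_sum, Matrix.mulVec, dotProduct, mul_left_comm]

def pairSign (N : ℕ) : Fin (N + N) → ℝ := Fin.addCases (fun _ => 1) (fun _ => -1)

lemma abs_pairSign (N : ℕ) (j : Fin (N + N)) : |pairSign N j| = 1 := by
  induction j using Fin.addCases <;>
    simp only [pairSign, Fin.addCases_left, Fin.addCases_right, abs_one, abs_neg]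

lemma sum_pairSign (N : ℕ) (f : ℝ → ℝ) : ∑ j, f (pairSign N j) = N * (f 1 + f (-1)) := by
  rw [Fin.sum_univ_add]
  simp only [pairSign, Fin.addCases_left, Fin.addCases_right]
  simp [mul_add]

def pairFFN (N L : ℕ) (o : Fin de) (g : Fin de → ℝ) (ε κ v : ℝ) : FFN de (N + N) L :=
  ⟨Matrix.of fun j => g + (pairSign N j * ε) • Pi.single o 1, 0, fun _ => κ • 1, 0,
    Matrix.of (Pi.single o fun j => pairSign N j * v), 0⟩

lemma pairFFN_eval (N L : ℕ) (o : Fin de) (g : Fin de → ℝ) (ε : ℝ) {κ : ℝ} (hκ : 0 ≤ κ)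
    (v : ℝ) (y : Fin de → ℝ) (i : Fin de) :
    (pairFFN N L o g ε κ v).eval y i = if i = o then
      N * v * κ ^ L * (relu (g ⬝ᵥ y + ε * y o) - relu (g ⬝ᵥ y - ε * y o)) else 0 := by
  rw [pairFFN, FFN.eval_smul_one _ _ hκ]
  by_cases hi : i = o
  · subst hi
    have h := sum_pairSign N fun s => s * v * relu (g ⬝ᵥ y + s * ε * y i)
    simp only [Matrix.mulVec, Matrix.of_apply, Pi.single_eq_same, add_dotProduct,
      smul_dotProduct, single_dotProduct, smul_eq_mul, one_mul, if_true, h]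
    ring_nf
  · simp [hi]

lemma pairFFN_wnorm_le {N L : ℕ} {o : Fin de} {g : Fin de → ℝ} {ε κ v : ℝ} (hκ : 0 ≤ κ)
    (hg : ∀ r, |g r| ≤ κ) (hgo : g o = 0) (hε : |ε| ≤ κ) (hv : |v| ≤ κ) :
    (pairFFN N L o g ε κ v).wnorm ≤ κ := by
  have hbias : ∀ {ι : Type}, (⨆ _ : ι, |(0 : ℝ)|) ≤ κ := Real.iSup_le (by simp [hκ]) hκ
  refine max_le (max_le (max_le (max_le (max_le ?_ hbias) ?_) ?_) ?_) hbias
  · refine matSup_le hκ fun j r => ?_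
    by_cases hr : r = o
    · subst hr
      simp [pairFFN, hgo, abs_mul, abs_pairSign, hε]
    · simpa [pairFFN, hr] using hg r
  · refine Real.iSup_le (fun _ => matSup_le hκ fun i j => ?_) hκ
    by_cases hij : i = j <;> simp [pairFFN, hij, abs_of_nonneg hκ, hκ]
  · exact Real.iSup_le (fun _ => hbias) hκ
  · refine matSup_le hκ fun i j => ?_
    by_cases hi : i = o
    · subst hi
      simp [pairFFN, abs_mul, abs_pairSign, hv]
    · simp [pairFFN, hi, hκ]

end FFN

section

open Real

lemma cos_mul_le_cos {a δ : ℝ} (hδ : 0 ≤ δ) (ha : 1 ≤ |a|) (haδ : |a| * δ ≤ π) :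
    cos (a * δ) ≤ cos δ := by
  rw [← cos_abs (a * δ), abs_mul, abs_of_nonneg hδ]
  exact cos_le_cos_of_nonneg_of_le_pi hδ haδ (le_mul_of_one_le_left hδ ha)

lemma cos_pi_div_two_mul_mem_Ico {ℓ : ℕ} (hℓ : 0 < ℓ) : cos (π / (2 * ℓ)) ∈ Set.Ico 0 1 := by
  have hℓ' : (1 : ℝ) ≤ ℓ := by exact_mod_cast hℓ
  have hpos : 0 < π / (2 * ℓ) := by positivity
  have hle : π / (2 * ℓ) ≤ π / 2 := div_le_div_of_nonneg_left pi_pos.le two_pos (by linarith)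
  refine ⟨cos_nonneg_of_neg_pi_div_two_le_of_le (by linarith) hle, ?_⟩
  simpa using cos_lt_cos_of_nonneg_of_le_pi le_rfl (by linarith [pi_pos]) hpos

-- `IsEmbed5` numbers tokens from `0`, so token `t` is the paper's token `t + 1`.
def posAngle (ℓ t : ℕ) : ℝ := ((t : ℝ) + 1) * π / (2 * ℓ)

lemma cos_posAngle_sub_le {ℓ t D : ℕ} (ht : t < ℓ) (hD : D < ℓ) (htD : t ≠ D) :
    cos (posAngle ℓ t - posAngle ℓ D) ≤ cos (π / (2 * ℓ)) := by
  have hℓ : (0 : ℝ) < ℓ := by exact_mod_cast (Nat.zero_le D).trans_lt hD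
  have hsub : posAngle ℓ t - posAngle ℓ D = ((t : ℝ) - D) * (π / (2 * ℓ)) := by
    unfold posAngle
    ring
  have hone : (1 : ℝ) ≤ |(t : ℝ) - D| := by
    rcases Nat.lt_or_gt_of_ne htD with h | h
    · have h' : (t : ℝ) + 1 ≤ D := by exact_mod_cast h
      rw [abs_of_neg (by linarith)]
      linarith
    · have h' : (D : ℝ) + 1 ≤ t := by exact_mod_cast h
      rw [abs_of_pos (by linarith)]
      linarith
  have hle : |(t : ℝ) - D| ≤ ℓ := abs_sub_le_of_nonneg_of_le (Nat.cast_nonneg t)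
    (by exact_mod_cast ht.le) (Nat.cast_nonneg D) (by exact_mod_cast hD.le)
  rw [hsub]
  refine cos_mul_le_cos (by positivity) hone ?_
  calc |(t : ℝ) - D| * (π / (2 * ℓ)) ≤ ℓ * (π / (2 * ℓ)) := by gcongr
    _ = π / 2 := by field_simp
    _ ≤ π := by linarith [pi_pos]

def locator (ℓ D : ℕ) (a b : ℝ) : Fin 5 → ℝ :=
  ![0, 0, a * cos (posAngle ℓ D), a * sin (posAngle ℓ D), -(a * b)]

lemma locator_dotProduct {ℓ D t : ℕ} (a b : ℝ) {y : Fin 5 → ℝ}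
    (h2 : y 2 = cos (posAngle ℓ t)) (h3 : y 3 = sin (posAngle ℓ t)) (h4 : y 4 = 1) :
    locator ℓ D a b ⬝ᵥ y = a * (cos (posAngle ℓ t - posAngle ℓ D) - b) := by
  simp [locator, dotProduct, Fin.sum_univ_five, h2, h3, h4, cos_sub]
  ring

lemma abs_locator_le {ℓ D : ℕ} {a b : ℝ} (ha : 0 ≤ a) (hb : |b| ≤ 1) (r : Fin 5) :
    |locator ℓ D a b r| ≤ a := by
  have hmul : ∀ {z : ℝ}, |z| ≤ 1 → |a * z| ≤ a := fun hz => by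
    rw [abs_mul, abs_of_nonneg ha]
    exact mul_le_of_le_one_right ha hz
  fin_cases r
  · simpa [locator] using ha
  · simpa [locator] using ha
  · exact hmul (abs_cos_le_one _)
  · exact hmul (abs_sin_le_one _)
  · exact (abs_neg (a * b)).trans_le (hmul hb)

lemma IsEmbed5.one_le_matSup {ℓ : ℕ} {H : Matrix (Fin 5) (Fin ℓ) ℝ} (hH : IsEmbed5 H)
    (hℓ : 0 < ℓ) : 1 ≤ matSup H := by
  simpa [hH.2.2.2] using abs_le_matSup H 4 ⟨0, hℓ⟩

lemma IsEmbed5.sumHead_locator_eval {ℓ D : ℕ} {H : Matrix (Fin 5) (Fin ℓ) ℝ} (hH : IsEmbed5 H)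
    (hD : D < ℓ) {κ : ℝ} (hκ : 0 ≤ κ) (i : Fin 5) (t : Fin ℓ) :
    (sumHead 0 4 (locator ℓ D κ (cos (π / (2 * ℓ)))) κ).eval H i t =
      if i = 0 ∧ (t : ℕ) = D then κ ^ 3 * (1 - cos (π / (2 * ℓ))) * ∑ s, H 0 s else 0 := by
  rw [sumHead_eval _ _ hH.2.2.2, locator_dotProduct _ _ (hH.2.1 t) (hH.2.2.1 t) (hH.2.2.2 t)]
  by_cases ht : (t : ℕ) = D
  · rw [ht, sub_self, cos_zero,
      relu_of_nonneg (mul_nonneg hκ (mul_nonneg hκ (sub_nonneg.mpr (cos_le_one _))))]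
    by_cases hi : i = 0 <;> simp [hi]
    ring
  · have hcos := cos_posAngle_sub_le t.isLt hD ht
    rw [relu_of_nonpos (by nlinarith [mul_self_nonneg κ]), mul_zero, ite_self,
      if_neg fun h => ht h.2]

def sumBlock (ℓ D N L : ℕ) (κ ε v : ℝ) : Block 5 D (N + N) L :=
  ⟨firstHeadOnly D (sumHead 0 4 (locator ℓ D κ (cos (π / (2 * ℓ)))) κ),
    pairFFN N L 0 (locator ℓ D κ 1) ε κ v⟩

lemma sumBlock_wnorm_le {ℓ D N L : ℕ} {κ ε v : ℝ} (hκ : 0 ≤ κ) (hε : |ε| ≤ κ) (hv : |v| ≤ κ) :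
    (sumBlock ℓ D N L κ ε v).wnorm ≤ κ :=
  max_le
    (Real.iSup_le (firstHeadOnly_wnorm_le hκ
      (sumHead_wnorm_le hκ (abs_locator_le hκ (abs_cos_le_one _)))) hκ)
    (pairFFN_wnorm_le hκ (abs_locator_le hκ (by simp)) (by simp [locator]) hε hv)

lemma sumBlock_eval {ℓ D N L : ℕ} {κ ε : ℝ} (v : ℝ) {H : Matrix (Fin 5) (Fin ℓ) ℝ}
    (hH : IsEmbed5 H) (hD : D < ℓ) (hH0 : ∀ t : Fin ℓ, D ≤ (t : ℕ) → H 0 t = 0)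
    (hκ : 0 ≤ κ) (hε : 0 ≤ ε) (hεH : ε * matSup H ≤ κ * (1 - cos (π / (2 * ℓ)))) :
    (sumBlock ℓ D N L κ ε v).eval H = Matrix.of fun (i : Fin 5) (t : Fin ℓ) =>
      if i = 0 ∧ (t : ℕ) = D then
        (1 + N * v * κ ^ L * ε) * (κ ^ 3 * (1 - cos (π / (2 * ℓ))) * ∑ s, H 0 s)
      else H i t := by
  set A := sumHead 0 4 (locator ℓ D κ (cos (π / (2 * ℓ)))) κ with hAdef
  have hA : ∀ i t, A.eval H i t = _ := hH.sumHead_locator_eval hD hκ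
  have hMHA : ∑ j, (firstHeadOnly D A j).eval H = A.eval H := by
    rcases D.eq_zero_or_pos with rfl | hD0
    · have hS : ∑ s, H 0 s = 0 := Finset.sum_eq_zero fun t _ => hH0 t (Nat.zero_le _)
      ext i t
      simp [hA, hS]
    · exact sum_firstHeadOnly_eval hD0 A H
  ext i t
  simp only [sumBlock, ← hAdef, Block.eval, hMHA, Matrix.add_apply, Matrix.of_apply,
    pairFFN_eval _ _ _ _ _ hκ]
  have hgate : locator ℓ D κ 1 ⬝ᵥ (fun r => A.eval H r t + H r t) =
      κ * (cos (posAngle ℓ t - posAngle ℓ D) - 1) :=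
    locator_dotProduct _ _ (by simp [hA, hH.2.1 t]; rfl) (by simp [hA, hH.2.2.1 t]; rfl)
      (by simp [hA, hH.2.2.2 t])
  rw [hgate]
  by_cases ht : (t : ℕ) = D
  · have hH0t := hH0 t ht.ge
    simp only [ht, sub_self, cos_zero, mul_zero, zero_add, zero_sub, relu_sub_relu_neg, hA]
    by_cases hi : i = 0
    · simp [hi, hH0t]
      ring
    · simp [hi]
  · have hA0 : ∀ r, A.eval H r t = 0 := fun r => by simp [hA, ht]
    have hcos := mul_le_mul_of_nonneg_left (cos_posAngle_sub_le t.isLt hD ht) hκ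
    have habs : |ε * H 0 t| ≤ ε * matSup H := by
      rw [abs_mul, abs_of_nonneg hε]
      exact mul_le_mul_of_nonneg_left (abs_le_matSup H 0 t) hε
    simp only [hA0, zero_add]
    rw [relu_add_sub_relu_sub_of_le_neg_abs (by linarith)]
    simp [ht]

theorem exists_block_writes_rowSum {κ : ℝ} (hκ : 0 < κ) (L : ℕ) {D ℓ : ℕ} (hD : D < ℓ)
    {H : Matrix (Fin 5) (Fin ℓ) ℝ} (hH : IsEmbed5 H)
    (hH0 : ∀ t : Fin ℓ, D ≤ (t : ℕ) → H 0 t = 0) :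
    ∃ (w : ℕ) (B : Block 5 D w L), B.wnorm ≤ κ ∧
      B.eval H = Matrix.of fun (i : Fin 5) (t : Fin ℓ) =>
        if i = 0 ∧ (t : ℕ) = D then ∑ s, H 0 s else H i t := by
  obtain ⟨hcos0, hcos1⟩ := cos_pi_div_two_mul_mem_Ico (Nat.zero_lt_of_lt hD)
  set p := 1 - cos (π / (2 * ℓ))
  have hp : 0 < p := by linarith
  have hm := hH.one_le_matSup (Nat.zero_lt_of_lt hD)
  set ε := κ * p / matSup H
  have hε : 0 < ε := by positivity
  have hεκ : ε ≤ κ := by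
    rw [div_le_iff₀ (by linarith)]
    nlinarith
  have hεH : ε * matSup H = κ * p := div_mul_cancel₀ _ (by linarith)
  set c := κ ^ 3 * p
  obtain ⟨N, v, hv, hNv⟩ := exists_nat_mul_eq (1 / c - 1) hκ (by positivity : 0 < κ ^ L * ε)
  have hgain : (1 + N * v * κ ^ L * ε) * c = 1 := by
    rw [show (N : ℝ) * v * κ ^ L * ε = N * v * (κ ^ L * ε) by ring, hNv, add_sub_cancel,
      one_div_mul_cancel (by positivity)]
  refine ⟨N + N, sumBlock ℓ D N L κ ε v, sumBlock_wnorm_le hκ.le (by rwa [abs_of_pos hε]) hv, ?_⟩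
  rw [sumBlock_eval v hH hD hH0 hκ.le hε.le hεH.le]
  ext i t
  simp only [Matrix.of_apply]
  split_ifs
  · rw [← mul_assoc, hgain, one_mul]
  · rfl

end

/-- Lemma: sum of tokens implemented by one transformer block. -/
theorem sum_of_tokens :
    ∃ C : ℝ, 0 < C ∧
      ∀ (D ℓ : ℕ), D + 1 ≤ ℓ →
      ∀ M : ℝ, 0 < M →
      ∀ x : Fin D → ℝ, supNorm x ≤ M →
      ∀ H : Matrix (Fin 5) (Fin ℓ) ℝ, IsEmbed5 H →
        (∀ t : Fin ℓ, ∀ h : (t : ℕ) < D, H 0 t = x ⟨(t : ℕ), h⟩) →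
        (∀ t : Fin ℓ, D ≤ (t : ℕ) → H 0 t = 0) →
        ∃ (w : ℕ) (B : Block 5 D w 6),
          B.wnorm ≤ C * (ℓ : ℝ) ^ 2 * M ^ 2 * matSup H ^ 2 ∧
          B.eval H = Matrix.of fun (i : Fin 5) (t : Fin ℓ) =>
            if i = 0 ∧ (t : ℕ) = D then ∑ j, x j else H i t := by
  refine ⟨1, one_pos, fun D ℓ hDℓ M hM x _ H hH hx hx0 => ?_⟩
  obtain ⟨w, B, hB, hBH⟩ := exists_block_writes_rowSum (pow_pos hM 2) 6 hDℓ hH hx0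
  refine ⟨w, B, hB.trans ?_, ?_⟩
  · have hℓ : (1 : ℝ) ≤ ℓ := by exact_mod_cast (Nat.le_add_left 1 D).trans hDℓ
    have hm := hH.one_le_matSup (by omega)
    calc M ^ 2 = 1 * 1 ^ 2 * M ^ 2 * 1 ^ 2 := by ring
      _ ≤ 1 * (ℓ : ℝ) ^ 2 * M ^ 2 * matSup H ^ 2 := by gcongr
  · rw [hBH, sum_eq_sum_of_zero_extension (by omega) _ x hx hx0]

end
end Paper
end

section
/- (Linear combination step) Let g : M → ℝ be bounded with ‖g‖_{L∞(M)} < ∞, let {z₁,…,z_K} ⊂ M, and let η(x) = (η₁(x),…,η_K(x)) be the normalized partition of unity with f̂(x) = Σ_{i=1}^K g(z_i) η_i(x). Suppose T₁(θ;·) = (T₁¹(θ;·),…,T₁^K(θ;·)) satisfies sup_{x∈M(q)} ‖T₁(θ;x) − η(x)‖₁ ≤ ε / ‖g‖_{L∞(M)}. Then there exist two transformer blocks B₁, B₂ ∈ 𝓑(K, 6, 5) such that T := (B₂ ∘ B₁) ∘ T₁ computes Σ_{i=1}^K g(z_i) T₁^i(θ;x) and satisfies |T(θ;x) − f̂(x)|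 ≤ ε for all x ∈ M(q). -/
open scoped BigOperators
open Metric Set MeasureTheory
open scoped Matrix

namespace Paper

noncomputable section

namespace LinCombAux

open Paper

lemma relu_of_nonpos {x : ℝ} (h : x ≤ 0) : relu x = 0 := max_eq_right h

lemma relu_one : relu 1 = 1 := max_eq_left one_pos.le

/-- The angle of the `t`-th positional encoding with `ℓ = K+1` columns. -/
noncomputable def ang (K : ℕ) (j : ℕ) : ℝ :=
  (((j : ℕ) : ℝ) + 1) * Real.pi / (2 * ((K + 1 : ℕ) : ℝ))

/-- The threshold `c₀ = cos (π / (2ℓ))`. -/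
noncomputable def thr (K : ℕ) : ℝ := Real.cos (Real.pi / (2 * ((K + 1 : ℕ) : ℝ)))

lemma thr_lt_one (K : ℕ) : thr K < 1 := by
  have hpos : (0:ℝ) < 2 * ((K + 1 : ℕ) : ℝ) := by positivity
  have h1 : 0 < Real.pi / (2 * ((K + 1 : ℕ) : ℝ)) := div_pos Real.pi_pos hpos
  have h2 : Real.pi / (2 * ((K + 1 : ℕ) : ℝ)) ≤ Real.pi := by
    have h1 : (1:ℝ) ≤ 2 * ((K + 1 : ℕ) : ℝ) := by push_cast; linarith [Nat.cast_nonneg (α := ℝ) K]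
    rw [div_le_iff₀ hpos]
    nlinarith [Real.pi_pos]
  have := Real.cos_lt_cos_of_nonneg_of_le_pi le_rfl h2 h1
  simpa [thr] using this

lemma cos_ang_sub_le (K : ℕ) {s t : ℕ} (hs : s ≤ K) (ht : t ≤ K) (hne : s ≠ t) :
    Real.cos (ang K s - ang K t) ≤ thr K := by
  have hpos : (0:ℝ) < 2 * ((K + 1 : ℕ) : ℝ) := by positivity
  have hdiff : ang K s - ang K t
      = (((s:ℝ) - (t:ℝ))) * (Real.pi / (2 * ((K + 1 : ℕ) : ℝ))) := by
    unfold ang; field_simp; ring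
  have habs : Real.cos (ang K s - ang K t)
      = Real.cos (|((s:ℝ) - (t:ℝ))| * (Real.pi / (2 * ((K + 1 : ℕ) : ℝ)))) := by
    rw [hdiff, ← Real.cos_abs, abs_mul, abs_of_nonneg (le_of_lt (div_pos Real.pi_pos hpos))]
  have hone : (1:ℝ) ≤ |((s:ℝ) - (t:ℝ))| := by
    have hz : ((s:ℤ) - (t:ℤ)) ≠ 0 := by
      intro h; apply hne; omega
    have := Int.one_le_abs hz
    have : (1:ℝ) ≤ |(((s:ℤ) - (t:ℤ) : ℤ) : ℝ)| := by
      rw [← Int.cast_abs]; exact_mod_cast this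
    simpa using this
  have hub : |((s:ℝ) - (t:ℝ))| ≤ (K:ℝ) := by
    rw [abs_sub_le_iff]
    constructor <;> [skip; skip] <;>
      · have hs' : (s:ℝ) ≤ K := by exact_mod_cast hs
        have ht' : (t:ℝ) ≤ K := by exact_mod_cast ht
        have hs0 : (0:ℝ) ≤ s := Nat.cast_nonneg s
        have ht0 : (0:ℝ) ≤ t := Nat.cast_nonneg t
        linarith
  have hpi : |((s:ℝ) - (t:ℝ))| * (Real.pi / (2 * ((K + 1 : ℕ) : ℝ))) ≤ Real.pi := by
    have hK : (K:ℝ) * (Real.pi / (2 * ((K + 1 : ℕ) : ℝ))) ≤ Real.pi := by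
      have hfrac : (K:ℝ) / (2 * ((K + 1 : ℕ) : ℝ)) ≤ 1 := by
        rw [div_le_one hpos]; push_cast; linarith [Nat.cast_nonneg (α := ℝ) K]
      calc (K:ℝ) * (Real.pi / (2 * ((K + 1 : ℕ) : ℝ)))
          = ((K:ℝ) / (2 * ((K + 1 : ℕ) : ℝ))) * Real.pi := by ring
        _ ≤ 1 * Real.pi := mul_le_mul_of_nonneg_right hfrac Real.pi_pos.le
        _ = Real.pi := one_mul _
    calc |((s:ℝ) - (t:ℝ))| * (Real.pi / (2 * ((K + 1 : ℕ) : ℝ)))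
        ≤ (K:ℝ) * (Real.pi / (2 * ((K + 1 : ℕ) : ℝ))) := by
          apply mul_le_mul_of_nonneg_right hub (le_of_lt (div_pos Real.pi_pos hpos))
      _ ≤ Real.pi := hK
  have hlow : Real.pi / (2 * ((K + 1 : ℕ) : ℝ))
      ≤ |((s:ℝ) - (t:ℝ))| * (Real.pi / (2 * ((K + 1 : ℕ) : ℝ))) := by
    nlinarith [div_pos Real.pi_pos hpos]
  have := Real.cos_le_cos_of_nonneg_of_le_pi (le_of_lt (div_pos Real.pi_pos hpos)) hpi hlow
  rw [habs]; exact this.trans_eq rfl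


/-- Attention head selecting column `i` (via positional encodings) and scaling by `c`. -/
noncomputable def selHead (K : ℕ) (c : ℝ) (i : Fin K) : Head 5 where
  Q := Matrix.of fun k r =>
    if k = 0 ∧ r = 4 then (1 - thr K)⁻¹ * Real.cos (ang K (i : ℕ))
    else if k = 1 ∧ r = 4 then (1 - thr K)⁻¹ * Real.sin (ang K (i : ℕ))
    else if k = 2 ∧ r = 4 then -((1 - thr K)⁻¹ * thr K)
    else 0
  K := Matrix.of fun k r =>
    if (k = 0 ∧ r = 2) ∨ (k = 1 ∧ r = 3) ∨ (k = 2 ∧ r = 4) then 1 else 0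
  V := Matrix.of fun k r => if k = 0 ∧ r = 0 then c else 0

set_option maxHeartbeats 1000000 in
lemma selHead_score (K : ℕ) (c : ℝ) (i : Fin K) (H : Matrix (Fin 5) (Fin (K + 1)) ℝ)
    (hH : IsEmbed5 H) (s t : Fin (K + 1)) :
    ((((selHead K c i).K * H)ᵀ * ((selHead K c i).Q * H)).map relu) s t
      = if (s : ℕ) = (i : ℕ) then 1 else 0 := by
  obtain ⟨h1, h2, h3, h4⟩ := hH
  have hone : (1 : ℝ) - thr K ≠ 0 := sub_ne_zero.mpr (thr_lt_one K).ne'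
  have hA0 : ((selHead K c i).K * H) 0 s = H 2 s := by
    simp (config := { decide := true })
      [Matrix.mul_apply, selHead, Fin.sum_univ_five, Matrix.of_apply]
  have hA1 : ((selHead K c i).K * H) 1 s = H 3 s := by
    simp (config := { decide := true })
      [Matrix.mul_apply, selHead, Fin.sum_univ_five, Matrix.of_apply]
  have hA2 : ((selHead K c i).K * H) 2 s = H 4 s := by
    simp (config := { decide := true })
      [Matrix.mul_apply, selHead, Fin.sum_univ_five, Matrix.of_apply]
  have hA3 : ((selHead K c i).K * H) 3 s = 0 := by
    simp (config := { decide := true })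
      [Matrix.mul_apply, selHead, Fin.sum_univ_five, Matrix.of_apply]
  have hA4 : ((selHead K c i).K * H) 4 s = 0 := by
    simp (config := { decide := true })
      [Matrix.mul_apply, selHead, Fin.sum_univ_five, Matrix.of_apply]
  have hB0 : ((selHead K c i).Q * H) 0 t
      = (1 - thr K)⁻¹ * Real.cos (ang K (i : ℕ)) * H 4 t := by
    simp (config := { decide := true })
      [Matrix.mul_apply, selHead, Fin.sum_univ_five, Matrix.of_apply]
  have hB1 : ((selHead K c i).Q * H) 1 t
      = (1 - thr K)⁻¹ * Real.sin (ang K (i : ℕ)) * H 4 t := by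
    simp (config := { decide := true })
      [Matrix.mul_apply, selHead, Fin.sum_univ_five, Matrix.of_apply]
  have hB2 : ((selHead K c i).Q * H) 2 t
      = -((1 - thr K)⁻¹ * thr K) * H 4 t := by
    simp (config := { decide := true })
      [Matrix.mul_apply, selHead, Fin.sum_univ_five, Matrix.of_apply]
  have hB3 : ((selHead K c i).Q * H) 3 t = 0 := by
    simp (config := { decide := true })
      [Matrix.mul_apply, selHead, Fin.sum_univ_five, Matrix.of_apply]
  have hB4 : ((selHead K c i).Q * H) 4 t = 0 := by
    simp (config := { decide := true })
      [Matrix.mul_apply, selHead, Fin.sum_univ_five, Matrix.of_apply]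
  have hval : ((((selHead K c i).K * H)ᵀ * ((selHead K c i).Q * H))) s t
      = (1 - thr K)⁻¹ * (Real.cos (ang K (s : ℕ) - ang K (i : ℕ)) - thr K) := by
    rw [Matrix.mul_apply]
    simp only [Matrix.transpose_apply, Fin.sum_univ_five]
    rw [hA0, hA1, hA2, hA3, hA4, hB0, hB1, hB2, hB3, hB4,
      h2 s, h3 s, h4 s, h4 t, Real.cos_sub]
    simp only [ang]
    ring
  rw [Matrix.map_apply, hval]
  rcases eq_or_ne (s : ℕ) (i : ℕ) with h | h
  · have hang : ang K (s : ℕ) = ang K (i : ℕ) := by unfold ang; rw [h]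
    rw [hang, sub_self, Real.cos_zero, if_pos h, inv_mul_cancel₀ hone]
    exact relu_one
  · have hsle : (s : ℕ) ≤ K := Nat.lt_succ_iff.mp s.isLt
    have hile : (i : ℕ) ≤ K := le_of_lt i.isLt
    have hle := cos_ang_sub_le K hsle hile h
    rw [if_neg h]
    apply relu_of_nonpos
    have ha : (0 : ℝ) ≤ (1 - thr K)⁻¹ :=
      inv_nonneg.mpr (by linarith [thr_lt_one K])
    exact mul_nonpos_of_nonneg_of_nonpos ha (by linarith)

lemma selHead_eval (K : ℕ) (c : ℝ) (i : Fin K) (H : Matrix (Fin 5) (Fin (K + 1)) ℝ)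
    (hH : IsEmbed5 H) (t : Fin (K + 1)) :
    (selHead K c i).eval H 0 t = c * H 0 ⟨(i : ℕ), by omega⟩ := by
  have hV : ∀ s : Fin (K + 1), ((selHead K c i).V * H) 0 s = c * H 0 s := by
    intro s
    simp (config := { decide := true })
      [Matrix.mul_apply, selHead, Fin.sum_univ_five, Matrix.of_apply]
  have key : (selHead K c i).eval H 0 t
      = ∑ s : Fin (K + 1),
          (if s = (⟨(i : ℕ), by omega⟩ : Fin (K + 1)) then c * H 0 s else 0) := by
    unfold Head.eval
    rw [Matrix.mul_apply]
    refine Finset.sum_congr rfl fun s _ => ?_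
    rw [hV s, selHead_score K c i H hH s t]
    by_cases hc : (s : ℕ) = (i : ℕ)
    · rw [if_pos hc, if_pos (Fin.ext (by simpa using hc)), mul_one]
    · rw [if_neg hc, if_neg (fun hs => hc (by simpa using congrArg Fin.val hs)), mul_zero]
  rw [key, Finset.sum_ite_eq']
  simp

noncomputable def zeroFFN : FFN 5 1 6 where
  Win := 0
  bin := 0
  Wmid := fun _ => 0
  bmid := fun _ => 0
  Wout := 0
  bout := 0

lemma zeroFFN_eval (x : Fin 5 → ℝ) (i : Fin 5) : zeroFFN.eval x i = 0 := by
  simp [FFN.eval, zeroFFN]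

noncomputable def zeroHead : Head 5 := ⟨0, 0, 0⟩

lemma zeroHead_eval {ℓ : ℕ} (H : Matrix (Fin 5) (Fin ℓ) ℝ) : zeroHead.eval H = 0 := by
  simp [Head.eval, zeroHead, Matrix.zero_mul]

noncomputable def idBlock (K : ℕ) : Block 5 K 1 6 := ⟨fun _ => zeroHead, zeroFFN⟩

lemma idBlock_eval {ℓ : ℕ} (K : ℕ) (H : Matrix (Fin 5) (Fin ℓ) ℝ) :
    (idBlock K).eval H = H := by
  unfold Block.eval idBlock
  ext i t
  simp [zeroHead_eval, zeroFFN_eval]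

noncomputable def sumBlock (K : ℕ) (c : Fin K → ℝ) : Block 5 K 1 6 :=
  ⟨fun i => selHead K (c i) i, zeroFFN⟩

lemma sumBlock_eval (K : ℕ) (c : Fin K → ℝ) (H : Matrix (Fin 5) (Fin (K + 1)) ℝ)
    (hH : IsEmbed5 H) (t : Fin (K + 1)) :
    (sumBlock K c).eval H 0 t
      = (∑ i : Fin K, c i * H 0 ⟨(i : ℕ), by omega⟩) + H 0 t := by
  have hsum : (∑ j : Fin K, ((sumBlock K c).heads j).eval H) 0 t
      = ∑ j : Fin K, c j * H 0 ⟨(j : ℕ), by omega⟩ := by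
    rw [Matrix.sum_apply]
    exact Finset.sum_congr rfl fun j _ => selHead_eval K (c j) j H hH t
  unfold Block.eval
  simp only [Matrix.add_apply, Matrix.of_apply]
  rw [hsum]
  have : (sumBlock K c).ffn = zeroFFN := rfl
  rw [this, zeroFFN_eval, zero_add]

end LinCombAux


/-- Linear combination step: two transformer blocks implement
`Σ_i g(z_i) T₁^i(θ;x)` and yield `|T(θ;x) − f̂(x)| ≤ ε` on `M(q)`. -/
theorem linear_combination_step :
    ∀ (D d K : ℕ) (M : GoodManifold D d) (q δ ε G : ℝ),
      0 ≤ q → q < 1 → 0 < δ → 0 < ε →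
      ∀ (N : SepNet M δ K) (g : Euc D → ℝ),
        BddAbove ((fun z => |g z|) '' M.carrier) →
        G = (⨆ z ∈ M.carrier, |g z|) → 0 < G →
      ∀ T₁ : Euc D → Fin K → ℝ,
        (∀ x ∈ M.tube q, ∑ i, |T₁ x i - etaFun M q δ N i x| ≤ ε / G) →
      ∃ (w ℓ : ℕ) (hK : K < ℓ) (B₁ B₂ : Block 5 K w 6),
        ∀ x ∈ M.tube q,
        ∀ H : Matrix (Fin 5) (Fin ℓ) ℝ, IsEmbed5 H →
          (∀ t : Fin ℓ, ∀ h : (t : ℕ) < K, H 0 t = T₁ x ⟨(t : ℕ), h⟩) →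
          (∀ t : Fin ℓ, K ≤ (t : ℕ) → H 0 t = 0) →
          (B₂.eval (B₁.eval H)) 0 ⟨K, hK⟩ = ∑ i, g (N.z i) * T₁ x i ∧
          |(B₂.eval (B₁.eval H)) 0 ⟨K, hK⟩
              - ∑ i, g (N.z i) * etaFun M q δ N i x| ≤ ε := by
  intro D d K M q δ ε G hq hq1 hδ hε N g hbdd hG hGpos T₁ hT₁
  refine ⟨1, K + 1, Nat.lt_succ_self K, LinCombAux.idBlock K,
    LinCombAux.sumBlock K (fun i => g (N.z i)), ?_⟩
  intro x hx H hH hlt hzero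
  rw [LinCombAux.idBlock_eval K H]
  have hGbound : ∀ i : Fin K, |g (N.z i)| ≤ G := by
    intro i
    rw [hG]
    obtain ⟨B, hB⟩ := hbdd
    have hz := N.mem i
    have hF : ∀ z : Euc D, (⨆ _ : z ∈ M.carrier, |g z|) ≤ max B 0 := by
      intro z
      by_cases hzS : z ∈ M.carrier
      · rw [ciSup_pos hzS]
        exact le_max_of_le_left (hB ⟨z, hzS, rfl⟩)
      · haveI : IsEmpty (z ∈ M.carrier) := ⟨hzS⟩
        rw [Real.iSup_of_isEmpty]
        exact le_max_right _ _
    refine le_trans (le_of_eq (ciSup_pos (f := fun _ : N.z i ∈ M.carrier => |g (N.z i)|) hz).symm)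
      (le_ciSup (f := fun z => ⨆ _ : z ∈ M.carrier, |g z|) ⟨max B 0, ?_⟩ (N.z i))
    rintro y ⟨z, rfl⟩
    exact hF z
  have hcol : H 0 (⟨K, Nat.lt_succ_self K⟩ : Fin (K + 1)) = 0 := hzero _ le_rfl
  have heval : (LinCombAux.sumBlock K (fun i => g (N.z i))).eval H 0
      (⟨K, Nat.lt_succ_self K⟩ : Fin (K + 1)) = ∑ i, g (N.z i) * T₁ x i := by
    rw [LinCombAux.sumBlock_eval K _ H hH _, hcol, add_zero]
    refine Finset.sum_congr rfl fun i _ => ?_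
    rw [hlt ⟨(i : ℕ), by omega⟩ (by simp)]
  refine ⟨heval, ?_⟩
  rw [heval, ← Finset.sum_sub_distrib]
  calc |∑ i, (g (N.z i) * T₁ x i - g (N.z i) * etaFun M q δ N i x)|
      ≤ ∑ i, |g (N.z i)| * |T₁ x i - etaFun M q δ N i x| := by
        refine (Finset.abs_sum_le_sum_abs _ _).trans ?_
        refine Finset.sum_le_sum fun i _ => ?_
        rw [← mul_sub, abs_mul]
    _ ≤ ∑ i, G * |T₁ x i - etaFun M q δ N i x| := by
        refine Finset.sum_le_sum fun i _ => ?_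
        exact mul_le_mul_of_nonneg_right (hGbound i) (abs_nonneg _)
    _ = G * ∑ i, |T₁ x i - etaFun M q δ N i x| := (Finset.mul_sum _ _ _).symm
    _ ≤ G * (ε / G) := mul_le_mul_of_nonneg_left (hT₁ x hx) hGpos.le
    _ = ε := by field_simp


end
end Paper
end
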